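/- Let (G,Γ₁,Γ₂) be a boundary triple for S, and let A, B be bounded linear operators on G such that A B* = B A* and ker M^{A,B} = {0} (so that H^{A,B} is self-adjoint), where M^{A,B}(x₁,x₂) = (A x₁ − B x₂, B x₁ + A x₂) on G ⊕ G. Then for every z in the resolvent set of H⁰: z is an eigenvalue of H^{A,B} if and only if ker(B Q(z) − A) ≠ {0}; moreover ker(H^{A,B} − z) = γ(z)(ker(B Q(z) − A)). -/

import Mathlib

open ContinuousLinearMap

variable {H : Type*} [NormedAddCommGroup H] [InnerProductSpace ℂ H] [CompleteSpace H]
variable {G : Type*} [NormedAddCommGroup G] [InnerProductSpace ℂ G] [CompleteSpace G]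

/-- The operator `M^{A,B}` on `G × G`, `(x₁,x₂) ↦ (A x₁ - B x₂, B x₁ + A x₂)`. -/
noncomputable def MAB (A B : G →L[ℂ] G) : (G × G) →L[ℂ] (G × G) :=
  ((A.comp (fst ℂ G G)) - (B.comp (snd ℂ G G))).prod
    ((B.comp (fst ℂ G G)) + (A.comp (snd ℂ G G)))

/-- A bounded operator is boundedly invertible if it has a bounded two-sided inverse. -/
def IsBoundedlyInvertible {E F : Type*} [NormedAddCommGroup E] [NormedSpace ℂ E]
    [NormedAddCommGroup F] [NormedSpace ℂ F] (T : E →L[ℂ] F) : Prop :=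
  ∃ T' : F →L[ℂ] E, (∀ x, T' (T x) = x) ∧ (∀ y, T (T' y) = y)

/-- A densely defined operator is symmetric if `⟪Sφ, ψ⟫ = ⟪φ, Sψ⟫` on its domain. -/
def IsSymmetricPMap (S : H →ₗ.[ℂ] H) : Prop :=
  ∀ φ ψ : S.domain, (inner ℂ (S φ) (ψ : H) : ℂ) = inner ℂ (φ : H) (S ψ)

/-- A boundary triple `(G, Γ₁, Γ₂)` for a symmetric operator `S`: two boundary maps
on `dom S*` satisfying the abstract Green identity and joint surjectivity. -/
structure BoundaryTriple (S : H →ₗ.[ℂ] H) (G : Type*) [NormedAddCommGroup G]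
    [InnerProductSpace ℂ G] [CompleteSpace G] where
  Γ₁ : S.adjoint.domain →ₗ[ℂ] G
  Γ₂ : S.adjoint.domain →ₗ[ℂ] G
  green : ∀ φ ψ : S.adjoint.domain,
    (inner ℂ (φ : H) (S.adjoint ψ) : ℂ) - inner ℂ (S.adjoint φ) (ψ : H)
      = (inner ℂ (Γ₁ φ) (Γ₂ ψ) : ℂ) - inner ℂ (Γ₂ φ) (Γ₁ ψ)
  surj : Function.Surjective fun φ : S.adjoint.domain => (Γ₁ φ, Γ₂ φ)

/-- The restriction of a partially defined operator `T` to a submodule `K` of its domain. -/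
noncomputable def pmapRestrict (T : H →ₗ.[ℂ] H) (K : Submodule ℂ T.domain) : H →ₗ.[ℂ] H where
  domain := K.map T.domain.subtype
  toFun := (T.toFun.comp K.subtype).comp
    (Submodule.equivMapOfInjective T.domain.subtype
      (Submodule.injective_subtype T.domain) K).symm.toLinearMap

/-- The distinguished extension `H⁰`: the restriction of `S*` to `ker Γ₁`. -/
noncomputable def H0 (S : H →ₗ.[ℂ] H) (BT : BoundaryTriple S G) : H →ₗ.[ℂ] H :=
  pmapRestrict S.adjoint (LinearMap.ker BT.Γ₁)

/-- The extension `H^{A,B}`: the restriction of `S*` to `{φ : A Γ₁ φ = B Γ₂ φ}`. -/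
noncomputable def HAB (S : H →ₗ.[ℂ] H) (BT : BoundaryTriple S G) (A B : G →L[ℂ] G) :
    H →ₗ.[ℂ] H :=
  pmapRestrict S.adjoint
    (LinearMap.ker ((A.toLinearMap.comp BT.Γ₁) - (B.toLinearMap.comp BT.Γ₂)))

/-- `R` is the resolvent of `T` at `z`: a bounded, everywhere defined two-sided inverse
of `T - z`. -/
def IsResolventOf (T : H →ₗ.[ℂ] H) (z : ℂ) (R : H →L[ℂ] H) : Prop :=
  (∀ f : H, ∃ φ : T.domain, (φ : H) = R f ∧ T φ - z • (φ : H) = f) ∧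
  (∀ φ : T.domain, R (T φ - z • (φ : H)) = φ)

/-- `z` is in the resolvent set of `T`. -/
def InResolventSet (T : H →ₗ.[ℂ] H) (z : ℂ) : Prop := ∃ R, IsResolventOf T z R

/-- `γz` is the `Γ`-field at `z`: the inverse of `Γ₁` restricted to the deficiency
space `N_z = ker (S* - z)`. -/
def IsGammaField (S : H →ₗ.[ℂ] H) (BT : BoundaryTriple S G) (z : ℂ) (γz : G →L[ℂ] H) : Prop :=
  (∀ ξ : G, ∃ φ : S.adjoint.domain, (φ : H) = γz ξ ∧ S.adjoint φ = z • (φ : H) ∧ BT.Γ₁ φ = ξ) ∧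
  (∀ φ : S.adjoint.domain, S.adjoint φ = z • (φ : H) → γz (BT.Γ₁ φ) = (φ : H))

/-- `Qz` is the `Q`-function (Weyl function) at `z`: `Qz = Γ₂ ∘ γz`. -/
def IsQFunction (S : H →ₗ.[ℂ] H) (BT : BoundaryTriple S G) (z : ℂ)
    (γz : G →L[ℂ] H) (Qz : G →L[ℂ] G) : Prop :=
  IsGammaField S BT z γz ∧
    ∀ φ : S.adjoint.domain, S.adjoint φ = z • (φ : H) → Qz (BT.Γ₁ φ) = BT.Γ₂ φ


/-!
An eigenvector `φ` of `H^{A,B}` at `z` lies in `N_z`, hence `φ = γ(z) u` with `u = Γ₁ φ`, and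
there `Γ₂ φ = Q(z) u`; so the boundary condition `A Γ₁ φ = B Γ₂ φ` says exactly
`(B Q(z) - A) u = 0`. Since `γ(z)` is injective, nonzero vectors correspond to nonzero vectors.
-/

section PartialOperator

variable {E : Type*} [NormedAddCommGroup E] [InnerProductSpace ℂ E]

def eigenspacePMap (T : E →ₗ.[ℂ] E) (z : ℂ) : Set E :=
  {f | ∃ φ : T.domain, (φ : E) = f ∧ T φ = z • (φ : E)}

theorem exists_ne_zero_eigenvector_iff (T : E →ₗ.[ℂ] E) (z : ℂ) :
    (∃ φ : T.domain, (φ : E) ≠ 0 ∧ T φ = z • (φ : E)) ↔ ∃ f ∈ eigenspacePMap T z, f ≠ 0 := by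
  constructor
  · rintro ⟨φ, hφ, heig⟩
    exact ⟨φ, ⟨φ, rfl, heig⟩, hφ⟩
  · rintro ⟨f, ⟨φ, rfl, heig⟩, hf⟩
    exact ⟨φ, hf, heig⟩

variable (T : E →ₗ.[ℂ] E) (K : Submodule ℂ T.domain)

theorem pmapRestrict_apply_of_mem {ψ : T.domain} (hψ : ψ ∈ K) :
    pmapRestrict T K ⟨ψ, ψ, hψ, rfl⟩ = T ψ := by
  have hinv : (Submodule.equivMapOfInjective T.domain.subtype
      (Submodule.injective_subtype T.domain) K).symm ⟨ψ, ψ, hψ, rfl⟩ = ⟨ψ, hψ⟩ := by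
    rw [LinearEquiv.symm_apply_eq]
    rfl
  exact congrArg (T.toFun ∘ₗ K.subtype) hinv

theorem eigenspacePMap_pmapRestrict (z : ℂ) :
    eigenspacePMap (pmapRestrict T K) z = {f | ∃ ψ ∈ K, (ψ : E) = f ∧ T ψ = z • (ψ : E)} := by
  ext f
  constructor
  · rintro ⟨⟨_, ψ, hψ, rfl⟩, rfl, heig⟩
    exact ⟨ψ, hψ, rfl, (pmapRestrict_apply_of_mem T K hψ).symm.trans heig⟩
  · rintro ⟨ψ, hψ, rfl, heig⟩
    exact ⟨⟨ψ, ψ, hψ, rfl⟩, rfl, (pmapRestrict_apply_of_mem T K hψ).trans heig⟩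

end PartialOperator

section GammaField

variable {S : H →ₗ.[ℂ] H} {BT : BoundaryTriple S G} {z : ℂ} {γz : G →L[ℂ] H}

theorem IsGammaField.injective (hγ : IsGammaField S BT z γz) : Function.Injective γz := by
  refine (injective_iff_map_eq_zero γz).2 fun u hu => ?_
  obtain ⟨φ, hφ, -, rfl⟩ := hγ.1 u
  have hφ0 : φ = 0 := Subtype.ext (hφ.trans hu)
  rw [hφ0, map_zero]

theorem IsGammaField.image_eq (hγ : IsGammaField S BT z γz) (s : Set G) :
    γz '' s = {f | ∃ φ : S.adjoint.domain,
      BT.Γ₁ φ ∈ s ∧ (φ : H) = f ∧ S.adjoint φ = z • (φ : H)} := by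
  ext f
  constructor
  · rintro ⟨u, hu, rfl⟩
    obtain ⟨φ, hφ, heig, rfl⟩ := hγ.1 u
    exact ⟨φ, hu, hφ, heig⟩
  · rintro ⟨φ, hu, rfl, heig⟩
    exact ⟨BT.Γ₁ φ, hu, hγ.2 φ heig⟩

end GammaField

theorem IsQFunction.mem_ker_boundary_iff {S : H →ₗ.[ℂ] H} {BT : BoundaryTriple S G}
    {z : ℂ} {γz : G →L[ℂ] H} {Qz : G →L[ℂ] G} (hQ : IsQFunction S BT z γz Qz)
    (A B : G →L[ℂ] G) {φ : S.adjoint.domain} (heig : S.adjoint φ = z • (φ : H)) :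
    φ ∈ LinearMap.ker (A.toLinearMap ∘ₗ BT.Γ₁ - B.toLinearMap ∘ₗ BT.Γ₂) ↔
      (B ∘L Qz - A) (BT.Γ₁ φ) = 0 := by
  rw [LinearMap.mem_ker, LinearMap.sub_apply, sub_apply, comp_apply, hQ.2 φ heig, sub_eq_zero,
    sub_eq_zero, eq_comm]
  rfl

theorem eigenspacePMap_HAB {S : H →ₗ.[ℂ] H} {BT : BoundaryTriple S G} {A B : G →L[ℂ] G}
    {z : ℂ} {γz : G →L[ℂ] H} {Qz : G →L[ℂ] G} (hQ : IsQFunction S BT z γz Qz) :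
    eigenspacePMap (HAB S BT A B) z = γz '' {u : G | (B ∘L Qz - A) u = 0} := by
  rw [HAB, eigenspacePMap_pmapRestrict, hQ.1.image_eq]
  ext f
  exact exists_congr fun φ => and_congr_left fun h => hQ.mem_ker_boundary_iff A B h.2

theorem eigenvalues_of_extensions_general (S : H →ₗ.[ℂ] H)
    (BT : BoundaryTriple S G) (A B : G →L[ℂ] G) :
    ∀ z : ℂ, InResolventSet (H0 S BT) z →
      ∀ (γz : G →L[ℂ] H) (Qz : G →L[ℂ] G), IsQFunction S BT z γz Qz →
        ((∃ φ : (HAB S BT A B).domain, (φ : H) ≠ 0 ∧ HAB S BT A B φ = z • (φ : H)) ↔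
          ∃ u : G, u ≠ 0 ∧ (B ∘L Qz - A) u = 0) ∧
        {f : H | ∃ φ : (HAB S BT A B).domain, (φ : H) = f ∧ HAB S BT A B φ = z • (φ : H)} =
          γz '' {u : G | (B ∘L Qz - A) u = 0} := by
  intro z _ γz Qz hQ
  have heigen := eigenspacePMap_HAB (A := A) (B := B) hQ
  refine ⟨?_, heigen⟩
  rw [exists_ne_zero_eigenvector_iff, heigen, Set.exists_mem_image]
  simp only [ne_eq, hQ.1.injective.eq_iff' (map_zero γz), Set.mem_ofPred_eq]
  exact exists_congr fun u => and_comm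

/-- Eigenvalues of self-adjoint extensions. Assume `A B* = B A*` and
`ker M^{A,B} = 0`. For `z` in the resolvent set of `H⁰`: `z` is an eigenvalue of `H^{A,B}`
iff `ker (BQ(z) − A) ≠ 0`, and `ker (H^{A,B} − z) = γ(z) (ker (BQ(z) − A))`. -/
theorem eigenvalues_of_extensions (S : H →ₗ.[ℂ] H)
    (hdense : Dense (S.domain : Set H)) (hclosed : S.IsClosed) (hsymm : IsSymmetricPMap S)
    (BT : BoundaryTriple S G) (A B : G →L[ℂ] G)
    (hAB : A ∘L adjoint B = B ∘L adjoint A)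
    (hker : ∀ x : G × G, MAB A B x = 0 → x = 0) :
    ∀ z : ℂ, InResolventSet (H0 S BT) z →
      ∀ (γz : G →L[ℂ] H) (Qz : G →L[ℂ] G), IsQFunction S BT z γz Qz →
        ((∃ φ : (HAB S BT A B).domain, (φ : H) ≠ 0 ∧ HAB S BT A B φ = z • (φ : H)) ↔
          ∃ u : G, u ≠ 0 ∧ (B ∘L Qz - A) u = 0) ∧
        {f : H | ∃ φ : (HAB S BT A B).domain, (φ : H) = f ∧ HAB S BT A B φ = z • (φ : H)} =
          γz '' {u : G | (B ∘L Qz - A) u = 0} :=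
  eigenvalues_of_extensions_general S BT A B
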